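/- Let j be an integer with j > 1 and let p = 2j/(2j-1). Let f ∈ L^p and let H ∈ L^{2j} satisfy: Ĥ(n) is real with Ĥ(n) ≥ 0 for all n ∈ ℤ; the function J = (conj H)^{j-1} H^j is a majorant of f; and Ĥ(n) = 0 at every integer n where Ĵ(n) > |f̂(n)|. Then Ĥ(n) = 0 at every integer n where f̂(n) = 0. -/

import Mathlib

/-!
If `Ĥ(n) > 0`, write `J = (conj H)^(j-1) * H^j`. All factors lie in `L²` and have nonnegative
Fourier coefficients (`conj H` has coefficients `Ĥ(-m)`), so by Parseval the coefficients of each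
product are convolutions of nonnegative sequences and dominate any single term. Keeping the term
that uses index `-n` for every `conj H` and `n` for every `H` gives `Ĵ(n) ≥ Ĥ(n)^(2j-1) > 0 = |f̂(n)|`,
and the slack condition then forces `Ĥ(n) = 0`.
-/

open MeasureTheory Complex
open scoped Real ENNReal

noncomputable section

instance : Fact (0 < 2 * Real.pi) := ⟨by positivity⟩

abbrev Circle2Pi := AddCircle (2 * Real.pi)

abbrev circleMeasure : Measure Circle2Pi := AddCircle.haarAddCircle

/-- `J` is a majorant of `f`. -/
def IsMajorant (J f : Circle2Pi → ℂ) : Prop :=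
  ∀ n : ℤ, (fourierCoeff J n).im = 0 ∧ ‖fourierCoeff f n‖ ≤ (fourierCoeff J n).re

open AddCircle ComplexConjugate
-- `0 ≤ z` in `ℂ` means that `z` is real and nonnegative.
open scoped ComplexOrder

theorem MeasureTheory.MemLp.pow {α 𝕜 : Type*} {m : MeasurableSpace α} [NormedCommRing 𝕜]
    {μ : Measure α} {f : α → 𝕜} {r : ℝ≥0∞} {k : ℕ} (hf : MemLp f (r * k) μ) (hk : k ≠ 0) :
    MemLp (f ^ k) r μ := by
  have hk' : (k : ℝ≥0∞) ≠ 0 := by exact_mod_cast hk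
  have hexp : (k : ℝ≥0∞) * (k * r)⁻¹ = r⁻¹ := by
    rw [ENNReal.mul_inv (Or.inl hk') (Or.inl (ENNReal.natCast_ne_top k)), ← mul_assoc,
      ENNReal.mul_inv_cancel hk' (ENNReal.natCast_ne_top k), one_mul]
  simpa [mul_comm r, hexp] using MemLp.prod (s := Finset.range k) (fun _ _ => hf)

theorem MeasureTheory.MemLp.pow_of_le {α 𝕜 : Type*} {m : MeasurableSpace α} [NormedCommRing 𝕜]
    {μ : Measure α} [IsFiniteMeasure μ] {f : α → 𝕜} {r : ℝ≥0∞} {i k : ℕ}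
    (hf : MemLp f (r * k) μ) (hik : i ≤ k) : MemLp (f ^ i) r μ := by
  rcases eq_or_ne i 0 with rfl | hi
  · rw [pow_zero]
    exact memLp_const 1
  · exact (hf.mono_exponent (by gcongr)).pow hi

section FourierCoefficients

variable {T : ℝ} [Fact (0 < T)]

theorem fourierCoeff_conj (f : AddCircle T → ℂ) (n : ℤ) :
    fourierCoeff (fun x => conj (f x)) n = conj (fourierCoeff f (-n)) := by
  simp only [fourierCoeff, ← integral_conj, smul_eq_mul, map_mul, neg_neg, ← fourier_neg]

theorem fourierCoeff_fourier_mul (f : AddCircle T → ℂ) (m n : ℤ) :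
    fourierCoeff (fun x => fourier m x * f x) n = fourierCoeff f (n - m) := by
  simp only [fourierCoeff, smul_eq_mul, ← mul_assoc, ← fourier_add]
  congr! 5
  ring

theorem memLp_fourier_mul {f : AddCircle T → ℂ} {p : ℝ≥0∞} (hf : MemLp f p haarAddCircle)
    (n : ℤ) : MemLp (fun x => fourier n x * f x) p haarAddCircle :=
  hf.mul' ((fourier n).continuous.memLp_top_of_hasCompactSupport
    (HasCompactSupport.of_compactSpace _) _)

theorem hasSum_fourierCoeff_mul {f g : AddCircle T → ℂ} (hf : MemLp f 2 haarAddCircle)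
    (hg : MemLp g 2 haarAddCircle) (n : ℤ) :
    HasSum (fun m => fourierCoeff f (n - m) * fourierCoeff g m) (fourierCoeff (f * g) n) := by
  have ha : MemLp (fun x => fourier n x * conj (f x)) 2 haarAddCircle :=
    memLp_fourier_mul hf.star n
  set a := ha.toLp
  set b := hg.toLp
  have hcoeff_a (m : ℤ) : inner ℂ a (fourierBasis m) = fourierCoeff f (n - m) := by
    rw [← inner_conj_symm, ← fourierBasis.repr_apply_apply, fourierBasis_repr,
      fourierCoeff_congr_ae ha.coeFn_toLp, fourierCoeff_fourier_mul, fourierCoeff_conj,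
      conj_conj, neg_sub]
  have hcoeff_b (m : ℤ) : inner ℂ (fourierBasis m) b = fourierCoeff g m := by
    rw [← fourierBasis.repr_apply_apply, fourierBasis_repr, fourierCoeff_congr_ae hg.coeFn_toLp]
  have hab : inner ℂ a b = fourierCoeff (f * g) n := by
    rw [MeasureTheory.L2.inner_def, fourierCoeff]
    refine integral_congr_ae ?_
    filter_upwards [ha.coeFn_toLp, hg.coeFn_toLp] with x hax hbx
    rw [hax, hbx, fourier_neg, RCLike.inner_apply, map_mul, conj_conj, smul_eq_mul, Pi.mul_apply]
    ring
  simpa only [hcoeff_a, hcoeff_b, hab] using fourierBasis.hasSum_inner_mul_inner a b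

theorem fourierCoeff_one : fourierCoeff (1 : AddCircle T → ℂ) = Pi.single 0 1 := by
  rw [← fourierCoeff_fourier (T := T) 0]
  congr with x
  exact fourier_zero.symm

variable {f g : AddCircle T → ℂ}

theorem fourierCoeff_conj_nonneg (hf : 0 ≤ fourierCoeff f) :
    0 ≤ fourierCoeff (fun x => conj (f x)) := fun n => by
  rw [fourierCoeff_conj, conj_eq_iff_im.2 (Complex.nonneg_iff.1 (hf (-n))).2.symm]
  exact hf (-n)

theorem fourierCoeff_mul_nonneg (hf : MemLp f 2 haarAddCircle) (hg : MemLp g 2 haarAddCircle)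
    (hf0 : 0 ≤ fourierCoeff f) (hg0 : 0 ≤ fourierCoeff g) : 0 ≤ fourierCoeff (f * g) := fun n =>
  (hasSum_fourierCoeff_mul hf hg n).nonneg fun _ => mul_nonneg (hf0 _) (hg0 _)

theorem mul_fourierCoeff_le_fourierCoeff_mul (hf : MemLp f 2 haarAddCircle)
    (hg : MemLp g 2 haarAddCircle) (hf0 : 0 ≤ fourierCoeff f) (hg0 : 0 ≤ fourierCoeff g)
    (m n : ℤ) : fourierCoeff f m * fourierCoeff g n ≤ fourierCoeff (f * g) (m + n) := by
  simpa using le_hasSum (hasSum_fourierCoeff_mul hf hg (m + n)) n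
    fun _ _ => mul_nonneg (hf0 _) (hg0 _)

theorem fourierCoeff_pow_nonneg {k : ℕ} (hf : MemLp f (2 * k) haarAddCircle)
    (hf0 : 0 ≤ fourierCoeff f) : 0 ≤ fourierCoeff (f ^ k) := by
  induction k with
  | zero =>
    rw [pow_zero, fourierCoeff_one]
    exact Pi.single_nonneg.2 zero_le_one
  | succ k ih =>
    rw [pow_succ]
    exact fourierCoeff_mul_nonneg (hf.pow_of_le k.le_succ)
      (by simpa using hf.pow_of_le (i := 1) (by omega))
      (ih (hf.mono_exponent (by gcongr; omega))) hf0

theorem pow_fourierCoeff_le_fourierCoeff_pow {k : ℕ} (hf : MemLp f (2 * k) haarAddCircle)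
    (hf0 : 0 ≤ fourierCoeff f) (n : ℤ) : fourierCoeff f n ^ k ≤ fourierCoeff (f ^ k) (k * n) := by
  induction k with
  | zero => simp [fourierCoeff_one]
  | succ k ih =>
    have hfk : MemLp f (2 * k) haarAddCircle := hf.mono_exponent (by gcongr; omega)
    calc fourierCoeff f n ^ (k + 1) = fourierCoeff f n ^ k * fourierCoeff f n := pow_succ _ _
      _ ≤ fourierCoeff (f ^ k) (k * n) * fourierCoeff f n :=
        mul_le_mul_of_nonneg_right (ih hfk) (hf0 n)
      _ ≤ fourierCoeff (f ^ k * f) (k * n + n) :=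
        mul_fourierCoeff_le_fourierCoeff_mul (hf.pow_of_le k.le_succ)
          (by simpa using hf.pow_of_le (i := 1) (by omega))
          (fourierCoeff_pow_nonneg hfk hf0) hf0 _ _
      _ = fourierCoeff (f ^ (k + 1)) ((k + 1 : ℕ) * n) := by
        rw [pow_succ]
        push_cast
        ring_nf

theorem pow_mul_pow_fourierCoeff_le {k l : ℕ} (hf : MemLp f (2 * k) haarAddCircle)
    (hg : MemLp g (2 * l) haarAddCircle) (hf0 : 0 ≤ fourierCoeff f) (hg0 : 0 ≤ fourierCoeff g)
    (m n : ℤ) :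
    fourierCoeff f m ^ k * fourierCoeff g n ^ l ≤ fourierCoeff (f ^ k * g ^ l) (k * m + l * n) :=
  (mul_le_mul (pow_fourierCoeff_le_fourierCoeff_pow hf hf0 m)
    (pow_fourierCoeff_le_fourierCoeff_pow hg hg0 n) (pow_nonneg (hg0 n) l)
    (fourierCoeff_pow_nonneg hf hf0 _)).trans
    (mul_fourierCoeff_le_fourierCoeff_mul (hf.pow_of_le le_rfl) (hg.pow_of_le le_rfl)
      (fourierCoeff_pow_nonneg hf hf0) (fourierCoeff_pow_nonneg hg hg0) _ _)

end FourierCoefficients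

theorem pConjugate_support_condition_general (j : ℕ) (hj : 1 < j)
    (f : Circle2Pi → ℂ)
    (H : Circle2Pi → ℂ) (hH : MemLp H (2 * j : ℝ≥0∞) circleMeasure)
    (hHpos : ∀ n : ℤ, (fourierCoeff H n).im = 0 ∧ 0 ≤ (fourierCoeff H n).re)
    (J : Circle2Pi → ℂ)
    (hJ : J = fun θ => (starRingEnd ℂ (H θ)) ^ (j - 1) * (H θ) ^ j)
    (hslack : ∀ n : ℤ, ‖fourierCoeff f n‖ < (fourierCoeff J n).re →
      fourierCoeff H n = 0) :
    ∀ n : ℤ, fourierCoeff f n = 0 → fourierCoeff H n = 0 := by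
  intro n hfn
  by_contra hne
  have hH0 : 0 ≤ fourierCoeff H := fun m => Complex.nonneg_iff.2 ⟨(hHpos m).2, (hHpos m).1.symm⟩
  have hHn : 0 < fourierCoeff H n := (hH0 n).lt_of_ne' hne
  have hconj : fourierCoeff (fun x => conj (H x)) (-n) = fourierCoeff H n := by
    rw [fourierCoeff_conj, neg_neg, conj_eq_iff_im.2 (hHpos n).1]
  have hJn : 0 < fourierCoeff J n :=
    calc 0 < fourierCoeff (fun x => conj (H x)) (-n) ^ (j - 1) * fourierCoeff H n ^ j := by
          rw [hconj]
          exact mul_pos (pow_pos hHn _) (pow_pos hHn _)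
      _ ≤ fourierCoeff ((fun x => conj (H x)) ^ (j - 1) * H ^ j)
          ((j - 1 : ℕ) * (-n) + j * n) :=
        pow_mul_pow_fourierCoeff_le (hH.star.mono_exponent (by gcongr; omega)) hH
          (fourierCoeff_conj_nonneg hH0) hH0 (-n) n
      _ = fourierCoeff J n := by
        rw [hJ]
        congr 1
        push_cast [Nat.cast_sub hj.le]
        ring
  refine hne (hslack n ?_)
  rw [hfn, norm_zero]
  exact (Complex.pos_iff.1 hJn).1

/-- conditions (1)–(3) of the definition of a `p`-conjugate imply
condition (4): `Ĥ(n) = 0` wherever `f̂(n) = 0`. -/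
theorem pConjugate_support_condition (j : ℕ) (hj : 1 < j)
    (p : ℝ≥0∞) (hp : p = (2 * j : ℝ≥0∞) / (2 * j - 1))
    (f : Circle2Pi → ℂ) (hf : MemLp f p circleMeasure)
    (H : Circle2Pi → ℂ) (hH : MemLp H (2 * j : ℝ≥0∞) circleMeasure)
    (hHpos : ∀ n : ℤ, (fourierCoeff H n).im = 0 ∧ 0 ≤ (fourierCoeff H n).re)
    (J : Circle2Pi → ℂ)
    (hJ : J = fun θ => (starRingEnd ℂ (H θ)) ^ (j - 1) * (H θ) ^ j)
    (hJmaj : IsMajorant J f)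
    (hslack : ∀ n : ℤ, ‖fourierCoeff f n‖ < (fourierCoeff J n).re →
      fourierCoeff H n = 0) :
    ∀ n : ℤ, fourierCoeff f n = 0 → fourierCoeff H n = 0 :=
  pConjugate_support_condition_general j hj f H hH hHpos J hJ hslack
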